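/- arXiv:1601.02323 — 7 statements merged into one kernel-verified Lean document; each statement's English description precedes it below -/
import Mathlib

section
/- Let n ≥ 1 and let d₁, …, d_n be nonzero complex numbers whose arguments all lie in a common interval [α, α+θ] for some real α, where 0 ≤ θ ≤ π/2 (so the angle between any pair of the vectors is at most θ). Then Σ_{i=1}^n |d_i| ≤ sec(θ/2) · |Σ_{i=1}^n d_i|. -/
open Real Complex

/-- Lemma 8: if nonzero complex numbers `d i` all have argument in a common
interval `[α, α+θ]` with `0 ≤ θ ≤ π/2`, then the sum of their magnitudes is
at most `sec (θ/2)` times the magnitude of their sum. -/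
theorem sum_abs_le_sec_half_mul_abs_sum
    (n : ℕ) (hn : 1 ≤ n) (d : Fin n → ℂ) (α θ : ℝ)
    (hθ0 : 0 ≤ θ) (hθ : θ ≤ π / 2)
    (hne : ∀ i, d i ≠ 0)
    (harg : ∀ i, (d i).arg ∈ Set.Icc α (α + θ)) :
    ∑ i, ‖d i‖ ≤ (1 / Real.cos (θ / 2)) * ‖∑ i, d i‖ := by
  set β : ℝ := α + θ / 2 with hβ
  have hcos : 0 < Real.cos (θ / 2) := by
    apply Real.cos_pos_of_mem_Ioo
    constructor <;> [linarith [Real.pi_pos]; linarith [Real.pi_pos]]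
  -- real part of rotated term
  have hre : ∀ i, (Complex.exp (-(β : ℂ) * Complex.I) * d i).re
      = ‖d i‖ * Real.cos ((d i).arg - β) := by
    intro i
    conv_lhs => rw [← Complex.norm_mul_exp_arg_mul_I (d i)]
    rw [mul_comm (Complex.exp _), mul_assoc, ← Complex.exp_add]
    have : ((d i).arg : ℂ) * Complex.I + -(β : ℂ) * Complex.I
        = (((d i).arg - β : ℝ) : ℂ) * Complex.I := by push_cast; ring
    rw [this]
    rw [Complex.re_ofReal_mul, Complex.exp_ofReal_mul_I_re]
  have hterm : ∀ i, ‖d i‖ * Real.cos (θ / 2)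
      ≤ (Complex.exp (-(β : ℂ) * Complex.I) * d i).re := by
    intro i
    rw [hre i]
    have h1 := (harg i).1
    have h2 := (harg i).2
    have habs : |(d i).arg - β| ≤ θ / 2 := by
      rw [abs_le]; constructor <;> simp [hβ] at * <;> linarith
    have : Real.cos (θ / 2) ≤ Real.cos ((d i).arg - β) := by
      rw [← Real.cos_abs ((d i).arg - β)]
      apply Real.cos_le_cos_of_nonneg_of_le_pi (abs_nonneg _) (by linarith [Real.pi_pos]) habs
    exact mul_le_mul_of_nonneg_left this (norm_nonneg _)
  have hsum : (∑ i, ‖d i‖) * Real.cos (θ / 2)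
      ≤ ‖∑ i, d i‖ := by
    calc (∑ i, ‖d i‖) * Real.cos (θ / 2)
        = ∑ i, ‖d i‖ * Real.cos (θ / 2) := by rw [Finset.sum_mul]
      _ ≤ ∑ i, (Complex.exp (-(β : ℂ) * Complex.I) * d i).re :=
          Finset.sum_le_sum fun i _ => hterm i
      _ = (Complex.exp (-(β : ℂ) * Complex.I) * ∑ i, d i).re := by
          rw [Finset.mul_sum, Complex.re_sum]
      _ ≤ ‖Complex.exp (-(β : ℂ) * Complex.I) * ∑ i, d i‖ :=
          Complex.re_le_norm _
      _ = ‖∑ i, d i‖ := by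
          rw [norm_mul]
          simp [Complex.norm_exp]
  rw [div_mul_eq_mul_div, le_div_iff₀ hcos]
  linarith
end

section
/- For all real numbers a, b ≥ 0 and every θ ∈ [0, π/2]: (a + b)² ≤ (2/(1 + cos θ)) · (a² + b² + 2·a·b·cos θ). -/
open Real

/-- Two-vector base case of Lemma 8: for `a, b ≥ 0` and `θ ∈ [0, π/2]`,
`(a + b)² ≤ (2/(1 + cos θ)) · (a² + b² + 2ab cos θ)`. -/
theorem sq_add_le_two_div_one_add_cos_mul
    (a b θ : ℝ) (ha : 0 ≤ a) (hb : 0 ≤ b) (hθ0 : 0 ≤ θ) (hθ : θ ≤ π / 2) :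
    (a + b) ^ 2 ≤ (2 / (1 + Real.cos θ)) * (a ^ 2 + b ^ 2 + 2 * a * b * Real.cos θ) := by
  have hc1 : Real.cos θ ≤ 1 := Real.cos_le_one θ
  have hc0 : 0 ≤ Real.cos θ := Real.cos_nonneg_of_mem_Icc ⟨by linarith [Real.pi_pos], hθ⟩
  rw [div_mul_eq_mul_div, le_div_iff₀ (by linarith)]
  nlinarith [sq_nonneg (a - b), mul_nonneg (sub_nonneg.2 hc1) (sq_nonneg (a - b))]
end

section
/- Let θ ∈ [0, π/2) and let d₀, d₁, d₂ be nonzero complex numbers whose arguments all lie in [0, π/2) and pairwise differ by at most θ. If |d₀ + d₁| ≥ |d₀ + d₂|, then |d₂| ≤ sec θ · |d₁|. -/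
open Real Complex

lemma re_mul_conj_aux (z w : ℂ) (hz : z ≠ 0) (hw : w ≠ 0) :
    (z * (starRingEnd ℂ) w).re = ‖z‖ * ‖w‖ * Real.cos (z.arg - w.arg) := by
  have haz : ‖z‖ ≠ 0 := by simpa using hz
  have haw : ‖w‖ ≠ 0 := by simpa using hw
  rw [Real.cos_sub, Complex.cos_arg hz, Complex.sin_arg, Complex.cos_arg hw, Complex.sin_arg]
  simp only [Complex.mul_re, Complex.conj_re, Complex.conj_im]
  field_simp
  ring

/-- Lemma 7: among three nonzero complex numbers in the first quadrant with
pairwise angle differences at most `θ < π/2`, if `|d₀ + d₁| ≥ |d₀ + d₂|`, then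
`|d₂| ≤ sec θ · |d₁|`. -/
theorem abs_le_sec_mul_abs_of_abs_add_ge
    (θ : ℝ) (hθ0 : 0 ≤ θ) (hθ : θ < π / 2)
    (d₀ d₁ d₂ : ℂ) (h₀ : d₀ ≠ 0) (h₁ : d₁ ≠ 0) (h₂ : d₂ ≠ 0)
    (harg₀ : d₀.arg ∈ Set.Ico 0 (π / 2))
    (harg₁ : d₁.arg ∈ Set.Ico 0 (π / 2))
    (harg₂ : d₂.arg ∈ Set.Ico 0 (π / 2))
    (h01 : |d₀.arg - d₁.arg| ≤ θ)
    (h02 : |d₀.arg - d₂.arg| ≤ θ)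
    (h12 : |d₁.arg - d₂.arg| ≤ θ)
    (habs : ‖d₀ + d₂‖ ≤ ‖d₀ + d₁‖) :
    ‖d₂‖ ≤ (1 / Real.cos θ) * ‖d₁‖ := by
  set r₀ := ‖d₀‖ with hr₀
  set r₁ := ‖d₁‖ with hr₁
  set r₂ := ‖d₂‖ with hr₂
  have hr0p : 0 < r₀ := by simpa [hr₀] using (norm_pos_iff.mpr h₀)
  have hr1p : 0 < r₁ := by simpa [hr₁] using (norm_pos_iff.mpr h₁)
  have hr2p : 0 < r₂ := by simpa [hr₂] using (norm_pos_iff.mpr h₂)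
  have hcosθ : 0 < Real.cos θ := Real.cos_pos_of_mem_Ioo ⟨by linarith [Real.pi_pos], hθ⟩
  -- squared inequality
  have hsq : ‖d₀ + d₂‖ ^ 2 ≤ ‖d₀ + d₁‖ ^ 2 := by
    apply pow_le_pow_left₀ (norm_nonneg _) habs
  rw [Complex.sq_norm, Complex.sq_norm, Complex.normSq_add, Complex.normSq_add] at hsq
  rw [re_mul_conj_aux d₀ d₁ h₀ h₁, re_mul_conj_aux d₀ d₂ h₀ h₂] at hsq
  have hns1 : Complex.normSq d₁ = r₁ ^ 2 := (Complex.sq_norm d₁).symm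
  have hns2 : Complex.normSq d₂ = r₂ ^ 2 := (Complex.sq_norm d₂).symm
  rw [hns1, hns2, ← hr₀, ← hr₁, ← hr₂] at hsq
  -- cos bounds
  have hc1 : Real.cos (d₀.arg - d₁.arg) ≤ 1 := Real.cos_le_one _
  have hc2 : Real.cos θ ≤ Real.cos (d₀.arg - d₂.arg) := by
    rw [← Real.cos_abs (d₀.arg - d₂.arg)]
    apply Real.cos_le_cos_of_nonneg_of_le_pi (abs_nonneg _) (by linarith [Real.pi_pos]) h02
  -- now conclude
  by_contra hcon
  push_neg at hcon
  have key : r₁ < r₂ * Real.cos θ := by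
    rw [div_mul_eq_mul_div, one_mul, div_lt_iff₀ hcosθ] at hcon
    exact hcon
  have hA := mul_le_mul_of_nonneg_left hc2 (mul_pos hr0p hr2p).le
  have hB := mul_le_mul_of_nonneg_left hc1 (mul_pos hr0p hr1p).le
  have hC : r₀ * r₁ < r₀ * (r₂ * Real.cos θ) := mul_lt_mul_of_pos_left key hr0p
  have hsq2 : r₂ ^ 2 < r₁ ^ 2 := by nlinarith [hA, hB, hC, hsq]
  have h21 : r₂ < r₁ := by nlinarith [hsq2, hr1p, hr2p]
  have h12' : r₁ < r₂ := lt_of_lt_of_le key (by nlinarith [Real.cos_le_one θ, hr2p])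
  linarith
end

section
/- For every θ ∈ [0, π/2) and every x ∈ [0, 1]: √(x²·cos²θ − x² + 1) − x·cos θ ≤ (1 − x)·sec θ. (The quantity under the square root, x² cos²θ − x² + 1, is nonnegative for x ∈ [0,1].) -/
open Real

/-- Key analytic estimate in the proof of Lemma 7: for `θ ∈ [0, π/2)` and
`x ∈ [0, 1]`, `√(x² cos²θ − x² + 1) − x cos θ ≤ (1 − x) · sec θ`. -/
theorem sqrt_sub_mul_cos_le
    (θ x : ℝ) (hθ0 : 0 ≤ θ) (hθ : θ < π / 2) (hx0 : 0 ≤ x) (hx1 : x ≤ 1) :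
    Real.sqrt (x ^ 2 * Real.cos θ ^ 2 - x ^ 2 + 1) - x * Real.cos θ ≤
      (1 - x) * (1 / Real.cos θ) := by
  have hc : 0 < Real.cos θ := Real.cos_pos_of_mem_Ioo
    ⟨by linarith [Real.pi_pos], hθ⟩
  have hc1 : Real.cos θ ≤ 1 := Real.cos_le_one θ
  have hinv : Real.cos θ * (1 / Real.cos θ) = 1 := by field_simp
  have hB : 0 ≤ (1 - x) * (1 / Real.cos θ) + x * Real.cos θ :=
    add_nonneg (mul_nonneg (by linarith) (by positivity)) (mul_nonneg hx0 hc.le)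
  rw [sub_le_iff_le_add]
  have key : x ^ 2 * Real.cos θ ^ 2 - x ^ 2 + 1 ≤
      ((1 - x) * (1 / Real.cos θ) + x * Real.cos θ) ^ 2 := by
    have h1 : 1 ≤ (1 / Real.cos θ) ^ 2 := by
      have := one_le_one_div hc hc1
      nlinarith
    nlinarith [sq_nonneg (1 - x), mul_pos hc hc]
  calc Real.sqrt (x ^ 2 * Real.cos θ ^ 2 - x ^ 2 + 1)
      ≤ Real.sqrt (((1 - x) * (1 / Real.cos θ) + x * Real.cos θ) ^ 2) :=
        Real.sqrt_le_sqrt key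
    _ = (1 - x) * (1 / Real.cos θ) + x * Real.cos θ := Real.sqrt_sq hB
end

section
/- Let θ ∈ [0, π/2). Let F be a finite index set, and let d₀, s* and s_k (for k ∈ F) be nonzero complex numbers whose arguments all lie in [0, π/2) and pairwise differ by at most θ. Suppose |s*| ≤ |s_k| for all k ∈ F, and |d₀ + s*| ≥ |d₀ + Σ_{k∈F} s_k|. Then |F| ≤ ⌊sec θ · sec(θ/2)⌋. -/
open Real Complex

/-- Core of Lemma 5: let `θ ∈ [0, π/2)` and let `d₀`, `s*` and `s k` (for `k` in a
finite set `F`) be nonzero complex numbers with arguments in `[0, π/2)` pairwise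
differing by at most `θ`. If `|s*| ≤ |s k|` for all `k ∈ F` and
`|d₀ + s*| ≥ |d₀ + ∑_{k ∈ F} s k|`, then `|F| ≤ ⌊sec θ · sec (θ/2)⌋`. -/
theorem card_le_floor_sec_mul_sec_half
    {ι : Type*} (θ : ℝ) (hθ0 : 0 ≤ θ) (hθ : θ < π / 2)
    (F : Finset ι) (d₀ sstar : ℂ) (s : ι → ℂ)
    (hne : ∀ x ∈ insert d₀ (insert sstar (s '' ↑F) : Set ℂ), x ≠ 0)
    (harg : ∀ x ∈ insert d₀ (insert sstar (s '' ↑F) : Set ℂ),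
      x.arg ∈ Set.Ico 0 (π / 2))
    (hpair : ∀ x ∈ insert d₀ (insert sstar (s '' ↑F) : Set ℂ),
      ∀ y ∈ insert d₀ (insert sstar (s '' ↑F) : Set ℂ), |x.arg - y.arg| ≤ θ)
    (hmin : ∀ k ∈ F, ‖sstar‖ ≤ ‖s k‖)
    (habs : ‖d₀ + ∑ k ∈ F, s k‖ ≤ ‖d₀ + sstar‖) :
    (F.card : ℤ) ≤ ⌊(1 / Real.cos θ) * (1 / Real.cos (θ / 2))⌋ := by
  have hπ : (0:ℝ) < π := Real.pi_pos
  have hcθ : 0 < Real.cos θ := Real.cos_pos_of_mem_Ioo ⟨by linarith, hθ⟩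
  have hcθ2 : 0 < Real.cos (θ/2) := Real.cos_pos_of_mem_Ioo ⟨by linarith, by linarith⟩
  -- memberships
  set T : Set ℂ := insert d₀ (insert sstar (s '' ↑F)) with hT
  have hd0mem : d₀ ∈ T := Set.mem_insert _ _
  have hsmem : sstar ∈ T := Set.mem_insert_of_mem _ (Set.mem_insert _ _)
  have hkmem : ∀ k ∈ F, s k ∈ T := fun k hk =>
    Set.mem_insert_of_mem _ (Set.mem_insert_of_mem _ ⟨k, hk, rfl⟩)
  -- re > 0, im ≥ 0 for members
  have hquad : ∀ x ∈ T, 0 < x.re ∧ 0 ≤ x.im := by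
    intro x hx
    have hx0 := hne x hx
    obtain ⟨h1, h2⟩ := harg x hx
    have habs0 : 0 < ‖x‖ := norm_pos_iff.mpr hx0
    constructor
    · have hc : 0 < Real.cos x.arg := Real.cos_pos_of_mem_Ioo ⟨by linarith, h2⟩
      have := Complex.norm_mul_cos_arg x
      nlinarith
    · have hs : 0 ≤ Real.sin x.arg := Real.sin_nonneg_of_nonneg_of_le_pi h1 (by linarith)
      have := Complex.norm_mul_sin_arg x
      nlinarith
  obtain ⟨hdre, hdim⟩ := hquad d₀ hd0mem
  obtain ⟨hsre, hsim⟩ := hquad sstar hsmem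
  -- argument of a sum via arctan
  have hargeq : ∀ x : ℂ, 0 < x.re → 0 ≤ x.im → x.arg = Real.arctan (x.im / x.re) := by
    intro x hre him
    have h1 : 0 ≤ x.arg := Complex.arg_nonneg_iff.mpr him
    have h2 : x.arg < π / 2 := Complex.arg_lt_pi_div_two_iff.mpr (Or.inl hre)
    rw [← Complex.tan_arg, Real.arctan_tan (by linarith) h2]
  set z := d₀ + sstar with hz
  have hzre : 0 < z.re := by simp only [hz, Complex.add_re]; linarith
  have hzim : 0 ≤ z.im := by simp only [hz, Complex.add_im]; linarith
  set φ := z.arg with hφ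
  set A := d₀.arg with hA
  set B := sstar.arg with hB
  -- φ between A and B
  have hbetween : min A B ≤ φ ∧ φ ≤ max A B := by
    have hA' : A = Real.arctan (d₀.im / d₀.re) := hargeq _ hdre hdim
    have hB' : B = Real.arctan (sstar.im / sstar.re) := hargeq _ hsre hsim
    have hφ' : φ = Real.arctan (z.im / z.re) := hargeq _ hzre hzim
    have hzre' : z.re = d₀.re + sstar.re := by simp [hz]
    have hzim' : z.im = d₀.im + sstar.im := by simp [hz]
    rcases le_total (d₀.im / d₀.re) (sstar.im / sstar.re) with h | h
    · have hml : d₀.im / d₀.re ≤ z.im / z.re := by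
        rw [hzre', hzim', div_le_div_iff₀ hdre (by linarith)]
        rw [div_le_div_iff₀ hdre hsre] at h
        nlinarith
      have hmr : z.im / z.re ≤ sstar.im / sstar.re := by
        rw [hzre', hzim', div_le_div_iff₀ (by linarith) hsre]
        rw [div_le_div_iff₀ hdre hsre] at h
        nlinarith
      constructor
      · calc min A B ≤ A := min_le_left _ _
          _ ≤ φ := by rw [hA', hφ']; exact Real.arctan_strictMono.monotone hml
      · calc φ ≤ B := by rw [hB', hφ']; exact Real.arctan_strictMono.monotone hmr
          _ ≤ max A B := le_max_right _ _
    · have hml : sstar.im / sstar.re ≤ z.im / z.re := by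
        rw [hzre', hzim', div_le_div_iff₀ hsre (by linarith)]
        rw [div_le_div_iff₀ hsre hdre] at h
        nlinarith
      have hmr : z.im / z.re ≤ d₀.im / d₀.re := by
        rw [hzre', hzim', div_le_div_iff₀ (by linarith) hdre]
        rw [div_le_div_iff₀ hsre hdre] at h
        nlinarith
      constructor
      · calc min A B ≤ B := min_le_right _ _
          _ ≤ φ := by rw [hB', hφ']; exact Real.arctan_strictMono.monotone hml
      · calc φ ≤ A := by rw [hA', hφ']; exact Real.arctan_strictMono.monotone hmr
          _ ≤ max A B := le_max_left _ _
  -- |arg (s k) - φ| ≤ θ for each k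
  have hclose : ∀ k ∈ F, |(s k).arg - φ| ≤ θ := by
    intro k hk
    have h1 := hpair (s k) (hkmem k hk) d₀ hd0mem
    have h2 := hpair (s k) (hkmem k hk) sstar hsmem
    rw [abs_sub_le_iff] at h1 h2 ⊢
    rcases le_total A B with h | h
    · simp [min_eq_left h, max_eq_right h] at hbetween
      exact ⟨by linarith [hbetween.2, h2.1], by linarith [hbetween.1, h1.2]⟩
    · simp [min_eq_right h, max_eq_left h] at hbetween
      exact ⟨by linarith [hbetween.2, h1.1], by linarith [hbetween.1, h2.2]⟩
  -- the linear functional g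
  set e : ℂ := Complex.exp (φ * Complex.I) with he
  have habse : ‖e‖ = 1 := Complex.norm_exp_ofReal_mul_I φ
  set g : ℂ → ℝ := fun w => ((starRingEnd ℂ) e * w).re with hg
  have hgle : ∀ w : ℂ, g w ≤ ‖w‖ := by
    intro w
    calc g w ≤ ‖(starRingEnd ℂ) e * w‖ := Complex.re_le_norm _
      _ = ‖w‖ := by rw [norm_mul, Complex.norm_conj, habse, one_mul]
  have hgw : ∀ w : ℂ, g w = ‖w‖ * Real.cos (w.arg - φ) := by
    intro w
    have h1 := Complex.norm_mul_cos_arg w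
    have h2 := Complex.norm_mul_sin_arg w
    have hre : e.re = Real.cos φ := Complex.exp_ofReal_mul_I_re φ
    have him : e.im = Real.sin φ := Complex.exp_ofReal_mul_I_im φ
    simp only [hg, Complex.mul_re, Complex.conj_re, Complex.conj_im, hre, him, Real.cos_sub]
    rw [← h1, ← h2]; ring
  have hgz : g z = ‖z‖ := by
    rw [hgw, hφ, sub_self, Real.cos_zero, mul_one]
  have hgadd : ∀ a b : ℂ, g (a + b) = g a + g b := by
    intro a b; simp only [hg, mul_add, Complex.add_re]
  have hgsum : g (∑ k ∈ F, s k) = ∑ k ∈ F, g (s k) := by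
    simp only [hg, Finset.mul_sum, Complex.re_sum]
  have hsstar : 0 < ‖sstar‖ := norm_pos_iff.mpr (hne sstar hsmem)
  have hone : ∀ k ∈ F, ‖sstar‖ * Real.cos θ ≤ g (s k) := by
    intro k hk
    rw [hgw]
    have hc := hclose k hk
    have hcos : Real.cos θ ≤ Real.cos ((s k).arg - φ) := by
      have h := Real.cos_le_cos_of_nonneg_of_le_pi (abs_nonneg ((s k).arg - φ))
        (by linarith) hc
      rwa [Real.cos_abs] at h
    have hm := hmin k hk
    nlinarith [norm_nonneg (s k)]
  have key : (F.card : ℝ) * (‖sstar‖ * Real.cos θ) ≤ ‖sstar‖ := by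
    calc (F.card : ℝ) * (‖sstar‖ * Real.cos θ)
        = ∑ _k ∈ F, (‖sstar‖ * Real.cos θ) := by
          rw [Finset.sum_const, nsmul_eq_mul]
      _ ≤ ∑ k ∈ F, g (s k) := Finset.sum_le_sum hone
      _ = g (d₀ + ∑ k ∈ F, s k) - g d₀ := by rw [hgadd, hgsum]; ring
      _ ≤ ‖d₀ + ∑ k ∈ F, s k‖ - g d₀ := by linarith [hgle (d₀ + ∑ k ∈ F, s k)]
      _ ≤ ‖z‖ - g d₀ := by linarith
      _ = g z - g d₀ := by rw [hgz]
      _ = g sstar := by rw [hz, hgadd]; ring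
      _ ≤ ‖sstar‖ := hgle _
  have hn : (F.card : ℝ) ≤ 1 / Real.cos θ := by
    rw [le_div_iff₀ hcθ]
    have := mul_le_mul_of_nonneg_right key (le_of_lt (inv_pos.mpr hsstar))
    calc (F.card : ℝ) * Real.cos θ
        = (F.card : ℝ) * (‖sstar‖ * Real.cos θ) * (‖sstar‖)⁻¹ := by
          field_simp
      _ ≤ ‖sstar‖ * (‖sstar‖)⁻¹ := this
      _ = 1 := mul_inv_cancel₀ (ne_of_gt hsstar)
  have hfinal : (F.card : ℝ) ≤ (1 / Real.cos θ) * (1 / Real.cos (θ / 2)) := by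
    have h1 : (1:ℝ) ≤ 1 / Real.cos (θ / 2) := by
      rw [le_div_iff₀ hcθ2, one_mul]; exact Real.cos_le_one _
    nlinarith [hn, one_div_pos.mpr hcθ]
  have := Int.le_floor.mpr (by push_cast; exact hfinal :
    ((F.card : ℤ) : ℝ) ≤ (1 / Real.cos θ) * (1 / Real.cos (θ / 2)))
  exact this
end

section
/- Let θ ∈ [0, π/2), ρ ≥ 1 a real number, and η ≥ 1 a natural number. Let F be a finite index set and j ∉ F a distinguished index. For each k ∈ F ∪ {j}, let P_k be a nonempty finite index set with |P_j| ≤ η, and for each e ∈ P_k let z_{k,e} and s_k be nonzero complex numbers such that |arg(s_k) − arg(z_{k,e})| ≤ θ for all such pairs, |s_j| ≤ |s_k| for all k ∈ F, and |z_{j,e'}| ≤ ρ·|z_{k,e}| for all e' ∈ P_j, k ∈ F, e ∈ P_k. Define Q_k = Σ_{e∈P_k} Re( conj(z_{k,e}) · s_k ). If Q_j ≥ Σ_{k∈F} Q_k, then |F| ≤ η · ρ · sec θ, and hence |F| ≤ ⌊η · ρ · sec θ⌋. -/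
open Real Complex

lemma re_conj_mul_eq (z s : ℂ) (hz : z ≠ 0) (hs : s ≠ 0) :
    ((starRingEnd ℂ) z * s).re = ‖z‖ * ‖s‖ * Real.cos (s.arg - z.arg) := by
  have hz' : ‖z‖ ≠ 0 := by simpa using hz
  have hs' : ‖s‖ ≠ 0 := by simpa using hs
  rw [Real.cos_sub, Complex.cos_arg hs, Complex.sin_arg, Complex.cos_arg hz, Complex.sin_arg,
    Complex.mul_re, Complex.conj_re, Complex.conj_im]
  field_simp
  ring

lemma cos_theta_le_cos {θ d : ℝ} (hθ0 : 0 ≤ θ) (hθ : θ < π / 2) (hd : |d| ≤ θ) :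
    Real.cos θ ≤ Real.cos d := by
  rw [← Real.cos_abs d]
  exact Real.cos_le_cos_of_nonneg_of_le_pi (abs_nonneg d)
    (le_trans hθ.le (by linarith [Real.pi_pos])) hd

/-- Core of Lemma 6: under the path/impedance/angle hypotheses, if
`Q j ≥ ∑_{k ∈ F} Q k` where `Q k = ∑_{e ∈ P k} Re (conj (z k e) · s k)`,
then `|F| ≤ η · ρ · sec θ` and hence `|F| ≤ ⌊η · ρ · sec θ⌋`. -/
theorem card_le_eta_rho_sec
    {ι ε : Type*} [DecidableEq ι] (θ ρ : ℝ) (η : ℕ)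
    (hθ0 : 0 ≤ θ) (hθ : θ < π / 2) (hρ : 1 ≤ ρ) (hη : 1 ≤ η)
    (F : Finset ι) (j : ι) (hj : j ∉ F)
    (P : ι → Finset ε) (z : ι → ε → ℂ) (s : ι → ℂ)
    (hPne : ∀ k ∈ insert j F, (P k).Nonempty)
    (hPj : (P j).card ≤ η)
    (hzne : ∀ k ∈ insert j F, ∀ e ∈ P k, z k e ≠ 0)
    (hsne : ∀ k ∈ insert j F, s k ≠ 0)
    (hangle : ∀ k ∈ insert j F, ∀ e ∈ P k, |(s k).arg - (z k e).arg| ≤ θ)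
    (hsmin : ∀ k ∈ F, ‖s j‖ ≤ ‖s k‖)
    (hρbound : ∀ e' ∈ P j, ∀ k ∈ F, ∀ e ∈ P k,
      ‖z j e'‖ ≤ ρ * ‖z k e‖)
    (hQ : ∑ k ∈ F, ∑ e ∈ P k, ((starRingEnd ℂ) (z k e) * s k).re ≤
          ∑ e ∈ P j, ((starRingEnd ℂ) (z j e) * s j).re) :
    (F.card : ℝ) ≤ (η : ℝ) * ρ * (1 / Real.cos θ) ∧
      (F.card : ℤ) ≤ ⌊(η : ℝ) * ρ * (1 / Real.cos θ)⌋ := by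
  have hcos : 0 < Real.cos θ :=
    Real.cos_pos_of_mem_Ioo ⟨lt_of_lt_of_le (by linarith [Real.pi_pos]) hθ0, hθ⟩
  have hρ0 : 0 < ρ := lt_of_lt_of_le one_pos hρ
  have hjmem : j ∈ insert j F := Finset.mem_insert_self j F
  -- maximal |z j e0|
  obtain ⟨e0, he0, he0max⟩ :=
    Finset.exists_max_image (P j) (fun e => ‖z j e‖) (hPne j hjmem)
  set A : ℝ := ‖z j e0‖ * ‖s j‖ with hA
  have hA0 : 0 < A :=
    mul_pos (norm_pos_iff.mpr (hzne j hjmem e0 he0)) (norm_pos_iff.mpr (hsne j hjmem))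
  -- upper bound on Q j
  have hQj : ∑ e ∈ P j, ((starRingEnd ℂ) (z j e) * s j).re ≤ (η : ℝ) * A := by
    calc ∑ e ∈ P j, ((starRingEnd ℂ) (z j e) * s j).re
        ≤ ∑ _e ∈ P j, A := by
          refine Finset.sum_le_sum fun e he => ?_
          rw [re_conj_mul_eq _ _ (hzne j hjmem e he) (hsne j hjmem)]
          have hnn : (0:ℝ) ≤ ‖z j e‖ * ‖s j‖ := by positivity
          calc ‖z j e‖ * ‖s j‖ * Real.cos ((s j).arg - (z j e).arg)
              ≤ ‖z j e‖ * ‖s j‖ * 1 :=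
                mul_le_mul_of_nonneg_left (Real.cos_le_one _) hnn
            _ = ‖z j e‖ * ‖s j‖ := mul_one _
            _ ≤ A := mul_le_mul_of_nonneg_right (he0max e he) (norm_nonneg _)
      _ = (P j).card * A := by rw [Finset.sum_const, nsmul_eq_mul]
      _ ≤ (η : ℝ) * A := mul_le_mul_of_nonneg_right (by exact_mod_cast hPj) hA0.le
  -- lower bound on each Q k
  have hQk : ∀ k ∈ F, A * Real.cos θ ≤
      ρ * ∑ e ∈ P k, ((starRingEnd ℂ) (z k e) * s k).re := by
    intro k hk
    have hk' : k ∈ insert j F := Finset.mem_insert_of_mem hk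
    obtain ⟨e, he⟩ := hPne k hk'
    have hterm : ∀ x ∈ P k, 0 ≤ ((starRingEnd ℂ) (z k x) * s k).re := by
      intro x hx
      rw [re_conj_mul_eq _ _ (hzne k hk' x hx) (hsne k hk')]
      have h := cos_theta_le_cos hθ0 hθ (hangle k hk' x hx)
      exact mul_nonneg (by positivity) (hcos.le.trans h)
    have hsingle := Finset.single_le_sum hterm he
    have hcosle := cos_theta_le_cos hθ0 hθ (hangle k hk' e he)
    have hzb : ‖z j e0‖ ≤ ρ * ‖z k e‖ := hρbound e0 he0 k hk e he
    have hsb := hsmin k hk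
    have step1 : A ≤ ρ * (‖z k e‖ * ‖s k‖) := by
      rw [hA, ← mul_assoc]
      exact mul_le_mul hzb hsb (norm_nonneg _)
        (by positivity)
    have step2 : A * Real.cos θ ≤
        ρ * (‖z k e‖ * ‖s k‖) * Real.cos ((s k).arg - (z k e).arg) :=
      mul_le_mul step1 hcosle hcos.le (by positivity)
    have step3 : ρ * (‖z k e‖ * ‖s k‖) *
        Real.cos ((s k).arg - (z k e).arg) = ρ * ((starRingEnd ℂ) (z k e) * s k).re := by
      rw [re_conj_mul_eq _ _ (hzne k hk' e he) (hsne k hk')]; ring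
    rw [step3] at step2
    exact step2.trans (mul_le_mul_of_nonneg_left hsingle hρ0.le)
  have hsum : (F.card : ℝ) * (A * Real.cos θ) ≤
      ρ * ∑ k ∈ F, ∑ e ∈ P k, ((starRingEnd ℂ) (z k e) * s k).re := by
    rw [Finset.mul_sum]
    calc (F.card : ℝ) * (A * Real.cos θ)
        = ∑ _k ∈ F, A * Real.cos θ := by rw [Finset.sum_const, nsmul_eq_mul]
      _ ≤ _ := Finset.sum_le_sum hQk
  have h5 := mul_le_mul_of_nonneg_left (hQ.trans hQj) hρ0.le
  have h4 : (F.card : ℝ) * Real.cos θ * A ≤ (η : ℝ) * ρ * A := by nlinarith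
  have h6 : (F.card : ℝ) * Real.cos θ ≤ (η : ℝ) * ρ := le_of_mul_le_mul_right h4 hA0
  have hmain : (F.card : ℝ) ≤ (η : ℝ) * ρ * (1 / Real.cos θ) := by
    rw [mul_one_div, le_div_iff₀ hcos]
    exact h6
  exact ⟨hmain, Int.le_floor.mpr (by exact_mod_cast hmain)⟩
end

section
/- Let V_0, V_a, V_b, S_a, S_b, β, C, C₀ be real numbers with β ≥ 1, C ≥ 0, C₀ ≥ 0, 0 < V_a < V_0, 0 < V_b < V_0, V_0² > β·C₀, V_a ≥ (V_0² − β·C₀)/V_0, |V_a·(V_a − V_b)| ≤ β·C, and S_a − S_b = (V_b − V_a)·(2·V_b + 2·V_a − V_0). Then |S_a − S_b| ≤ 3·β·C·V_0² / (V_0² − β·C₀). -/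
/-- Inequality chain in the proof of Theorem 2: the capacity constraint on the
cross edge together with the voltage lower bound and the power-difference
identity bounds `|S_a − S_b|` by `3βC V_0²/(V_0² − βC₀)`. -/
theorem power_difference_bound
    (V0 Va Vb Sa Sb β C C0 : ℝ)
    (hβ : 1 ≤ β) (hC : 0 ≤ C) (hC0 : 0 ≤ C0)
    (hVa0 : 0 < Va) (hVaV0 : Va < V0)
    (hVb0 : 0 < Vb) (hVbV0 : Vb < V0)
    (hV0C0 : β * C0 < V0 ^ 2)
    (hVa : (V0 ^ 2 - β * C0) / V0 ≤ Va)
    (hcap : |Va * (Va - Vb)| ≤ β * C)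
    (hid : Sa - Sb = (Vb - Va) * (2 * Vb + 2 * Va - V0)) :
    |Sa - Sb| ≤ 3 * β * C * V0 ^ 2 / (V0 ^ 2 - β * C0) := by
  have hV0 : 0 < V0 := hVa0.trans hVaV0
  have hD : 0 < V0 ^ 2 - β * C0 := by linarith
  have hVa' : V0 ^ 2 - β * C0 ≤ Va * V0 := by
    rwa [div_le_iff₀ hV0] at hVa
  have h1 : Va * |Va - Vb| ≤ β * C := by
    rwa [abs_mul, abs_of_pos hVa0] at hcap
  have hA : 0 ≤ |Vb - Va| := abs_nonneg _
  have hAB : |Vb - Va| = |Va - Vb| := abs_sub_comm _ _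
  have h3 : |2 * Vb + 2 * Va - V0| ≤ 3 * V0 := by
    rw [abs_le]; constructor <;> nlinarith
  rw [hid, abs_mul, le_div_iff₀ hD]
  have step1 : |Vb - Va| * (V0 ^ 2 - β * C0) ≤ β * C * V0 := by
    calc |Vb - Va| * (V0 ^ 2 - β * C0) ≤ |Vb - Va| * (Va * V0) :=
          mul_le_mul_of_nonneg_left hVa' hA
    _ = (Va * |Va - Vb|) * V0 := by rw [hAB]; ring
    _ ≤ β * C * V0 := by nlinarith
  calc |Vb - Va| * |2 * Vb + 2 * Va - V0| * (V0 ^ 2 - β * C0)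
      = (|Vb - Va| * (V0 ^ 2 - β * C0)) * |2 * Vb + 2 * Va - V0| := by ring
    _ ≤ (β * C * V0) * (3 * V0) := by
        apply mul_le_mul step1 h3 (abs_nonneg _)
        positivity
    _ = 3 * β * C * V0 ^ 2 := by ring
end
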